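/- Let n_1, n_2, n_3 ≥ 2 be integers, and let L be the graph Laplacian of the 3-partite graph G_{n_1,n_2,n_3}. Then the cokernel ℤ^{n_1+n_2+n_3}/im L is isomorphic as an abelian group to ℤ ⊕ (ℤ/n_2ℤ)^{⊕(n_1+n_3−2)} ⊕ (ℤ/(n_1+n_3)ℤ)^{⊕(n_2−2)} ⊕ ℤ/(n_2(n_1+n_3))ℤ. -/

import Mathlib

/-!
The graph `G_{n₁,n₂,n₃}` is the complete bipartite graph `K_{n₁+n₃,n₂}` with sides `V₁ ∪ V₃`
and `V₂`, so it suffices to compute the cokernel of the Laplacian `L` of `K_{m,n}`. Fix two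
vertices `a₀, a₁` on the side of size `m` and `b₀, b₁` on the other side, and write `𝟙_B` for
the indicator of the side of size `n`. Then `L(m e_{a₀} - n e_{b₀} + 𝟙_B) = nm (e_{a₀} - e_{b₀})`,
and together with the vectors `e_{a₀}`, `e_{b₀}`, `𝟙`, `e_a - e_{a₀}`, `e_b - e_{b₀}` and their
images this gives two explicit families `(s_v)`, `(t_v)` with `L s_v = d_v t_v`, where `d` takes
the values `1, 1, 0, nm`, then `n` (`m - 2` times) and `m` (`n - 2` times). Both families span
`ℤ^{m+n}`, hence are bases (a surjective endomorphism of a finitely generated module is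
injective), so `L` has Smith normal form `diag d` and its cokernel is `⊕ ℤ/d_v`.
-/

open Matrix

/-- The `k`-partite graph `G_{n 0, …, n (k-1)}` (parts indexed `0,…,k-1`, part `i` of size `n i`):
two vertices are adjacent iff they lie in consecutive parts. -/
def kpartiteGraph (k : ℕ) (n : ℕ → ℕ) : SimpleGraph (Σ i : Fin k, Fin (n i.val)) where
  Adj v w := v.1.val + 1 = w.1.val ∨ w.1.val + 1 = v.1.val
  symm := ⟨fun v w h => Or.symm h⟩
  loopless := ⟨fun v h => by rcases h with h | h <;> omega⟩

instance (k : ℕ) (n : ℕ → ℕ) : DecidableRel (kpartiteGraph k n).Adj :=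
  fun v w => inferInstanceAs (Decidable (v.1.val + 1 = w.1.val ∨ w.1.val + 1 = v.1.val))

/-- The cokernel `ℤ^m / im M` of a square integer matrix, viewed as a `ℤ`-linear map. -/
abbrev Matrix.cokernel {m : Type*} [Fintype m] (M : Matrix m m ℤ) : Type _ :=
  (m → ℤ) ⧸ LinearMap.range M.mulVecLin

open SimpleGraph

namespace Submodule

variable {R ι : Type*} [Ring R] [Fintype ι] [DecidableEq ι]

theorem single_mem_of_apply_eq_one {p : Submodule R (ι → R)} {x : ι → R} {i : ι}
    (hx : x ∈ p) (hxi : x i = 1) (h : ∀ j ≠ i, x j ≠ 0 → Pi.single j 1 ∈ p) :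
    Pi.single i 1 ∈ p := by
  have hsum : x = Pi.single i 1 + ∑ j ∈ Finset.univ.erase i, Pi.single j (x j) := by
    rw [← hxi, Finset.add_sum_erase _ (fun j => Pi.single j (x j)) (Finset.mem_univ i),
      Finset.univ_sum_single]
  rw [eq_sub_of_add_eq hsum.symm]
  refine sub_mem hx (sum_mem fun j hj => ?_)
  by_cases hj0 : x j = 0
  · simp [hj0]
  · rw [← mul_one (x j), ← smul_eq_mul, Pi.single_smul']
    exact smul_mem _ _ (h j (Finset.ne_of_mem_erase hj) hj0)

theorem eq_top_of_forall_single_mem {p : Submodule R (ι → R)} (h : ∀ i, Pi.single i 1 ∈ p) :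
    p = ⊤ :=
  eq_top_iff.2 <| (Pi.basisFun R ι).span_eq ▸ span_le.2 (Set.range_subset_iff.2 fun i => by
    simpa using h i)

end Submodule

section SmithNormalForm

open Submodule LinearMap

variable {ι : Type*}

theorem LinearMap.range_piMap_mulLeft {R : Type*} [CommRing R] (d : ι → R) :
    range (piMap fun i => mulLeft R (d i)) = Submodule.pi Set.univ fun i => Ideal.span {d i} := by
  ext x
  simp [mem_pi, Ideal.mem_span_singleton, dvd_def, funext_iff, Classical.skolem, eq_comm]

variable [Fintype ι] [DecidableEq ι]

noncomputable def LinearMap.quotRangeEquivPiZMod (L : (ι → ℤ) →ₗ[ℤ] ι → ℤ) {s t : ι → ι → ℤ}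
    {d : ι → ℕ} (hs : span ℤ (Set.range s) = ⊤) (ht : span ℤ (Set.range t) = ⊤)
    (hL : ∀ i, L (s i) = (d i : ℤ) • t i) :
    ((ι → ℤ) ⧸ range L) ≃+ ∀ i, ZMod (d i) :=
  have ht' : range (Fintype.linearCombination ℤ t) = ⊤ := by
    rw [Fintype.range_linearCombination, ht]
  have hcomp : L ∘ₗ Fintype.linearCombination ℤ s =
      Fintype.linearCombination ℤ t ∘ₗ piMap fun i => mulLeft ℤ (d i : ℤ) := by
    refine LinearMap.ext fun c => ?_
    simp only [LinearMap.comp_apply, Fintype.linearCombination_apply, coe_piMap, Pi.map_apply,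
      mulLeft_apply, map_sum, map_smul, hL, smul_smul, mul_comm]
  have hrange : range L = (Submodule.pi Set.univ fun i => Ideal.span {(d i : ℤ)}).map
      (Fintype.linearCombination ℤ t) := by
    rw [← range_comp_of_range_eq_top (f := Fintype.linearCombination ℤ s) L
      (by rw [Fintype.range_linearCombination, hs]), hcomp, range_comp, range_piMap_mulLeft]
  let Φ : (ι → ℤ) ≃ₗ[ℤ] ι → ℤ := .ofBijective (Fintype.linearCombination ℤ t)
    ⟨OrzechProperty.injective_of_surjective_endomorphism _ (range_eq_top.1 ht'),
      range_eq_top.1 ht'⟩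
  (Quotient.equiv _ _ Φ hrange.symm).symm.toAddEquiv.trans <| (quotientPi _).toAddEquiv.trans <|
    AddEquiv.piCongrRight fun i => (Int.quotientSpanNatEquivZMod (d i)).toAddEquiv

end SmithNormalForm

def LinearEquiv.piOptionOptionEquivProd (R : Type*) [Semiring R] {ι : Type*}
    {M : Option (Option ι) → Type*} [∀ i, AddCommMonoid (M i)] [∀ i, Module R (M i)] :
    (∀ i, M i) ≃ₗ[R] M none × M (some none) × ∀ i, M (some (some i)) :=
  (piOptionEquivProd R).trans ((refl R _).prodCongr (piOptionEquivProd R))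

noncomputable def Matrix.cokernelSubmatrixEquiv {m n : Type*} [Fintype m] [Fintype n]
    (M : Matrix n n ℤ) (e : m ≃ n) : (M.submatrix e e).cokernel ≃ₗ[ℤ] M.cokernel :=
  Submodule.Quotient.equiv _ _ (LinearEquiv.funCongrLeft ℤ ℤ e.symm) <| by
    have hcomp : (LinearEquiv.funCongrLeft ℤ ℤ e.symm).toLinearMap ∘ₗ
        (M.submatrix e e).mulVecLin =
          M.mulVecLin ∘ₗ (LinearEquiv.funCongrLeft ℤ ℤ e.symm).toLinearMap := by
      ext x : 1
      simp [submatrix_mulVec_equiv, LinearMap.funLeft, Function.comp_def]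
    rw [← LinearMap.range_comp, hcomp, LinearMap.range_comp_of_range_eq_top _
      (LinearEquiv.range _)]

namespace SimpleGraph

variable {V W : Type*} [Fintype V] [Fintype W] [DecidableEq V] [DecidableEq W]
  {G : SimpleGraph V} {H : SimpleGraph W} [DecidableRel G.Adj] [DecidableRel H.Adj]

theorem Iso.lapMatrix_submatrix (R : Type*) [Ring R] (f : G ≃g H) :
    (H.lapMatrix R).submatrix f f = G.lapMatrix R := by
  ext v w
  simp [lapMatrix, degMatrix, adjMatrix_apply, diagonal_apply, f.map_adj_iff]

noncomputable def Iso.cokernelLapMatrixEquiv (f : G ≃g H) :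
    (G.lapMatrix ℤ).cokernel ≃ₗ[ℤ] (H.lapMatrix ℤ).cokernel :=
  (Submodule.quotEquivOfEq _ _ (by rw [← f.lapMatrix_submatrix ℤ]; rfl)).trans
    ((H.lapMatrix ℤ).cokernelSubmatrixEquiv f.toEquiv)

end SimpleGraph

section CompleteBipartite

variable {α β : Type*} [Fintype α] [Fintype β] [DecidableEq α] [DecidableEq β]

instance : DecidableRel (completeBipartiteGraph α β).Adj := fun v w =>
  inferInstanceAs (Decidable (v.isLeft ∧ w.isRight ∨ v.isRight ∧ w.isLeft))

variable {R : Type*} [Ring R]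

theorem completeBipartiteGraph_lapMatrix_mulVec_inl (x : α ⊕ β → R) (a : α) :
    ((completeBipartiteGraph α β).lapMatrix R *ᵥ x) (.inl a) =
      Fintype.card β * x (.inl a) - ∑ b, x (.inr b) := by
  rw [lapMatrix_mulVec_apply, ← card_neighborFinset_eq_degree, neighborFinset_eq_filter,
    Finset.card_eq_sum_ones, Finset.sum_filter, Finset.sum_filter]
  simp only [Fintype.sum_sum_type, completeBipartiteGraph_adj]
  simp

theorem completeBipartiteGraph_lapMatrix_mulVec_inr (x : α ⊕ β → R) (b : β) :
    ((completeBipartiteGraph α β).lapMatrix R *ᵥ x) (.inr b) =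
      Fintype.card α * x (.inr b) - ∑ a, x (.inl a) := by
  rw [lapMatrix_mulVec_apply, ← card_neighborFinset_eq_degree, neighborFinset_eq_filter,
    Finset.card_eq_sum_ones, Finset.sum_filter, Finset.sum_filter]
  simp only [Fintype.sum_sum_type, completeBipartiteGraph_adj]
  simp

theorem completeBipartiteGraph_lapMatrix_mulVec_single_inl (a : α) :
    (completeBipartiteGraph α β).lapMatrix R *ᵥ Pi.single (.inl a) 1 =
      (Fintype.card β : R) • Pi.single (.inl a) 1 - (Sum.elim 0 1 : α ⊕ β → R) := by
  ext (a' | b) <;>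
    simp [completeBipartiteGraph_lapMatrix_mulVec_inl, completeBipartiteGraph_lapMatrix_mulVec_inr,
      Pi.single_apply]

theorem completeBipartiteGraph_lapMatrix_mulVec_single_inr (b : β) :
    (completeBipartiteGraph α β).lapMatrix R *ᵥ Pi.single (.inr b) 1 =
      (Fintype.card α : R) • Pi.single (.inr b) 1 - (Sum.elim 1 0 : α ⊕ β → R) := by
  ext (a | b') <;>
    simp [completeBipartiteGraph_lapMatrix_mulVec_inl, completeBipartiteGraph_lapMatrix_mulVec_inr,
      Pi.single_apply]

theorem completeBipartiteGraph_lapMatrix_mulVec_elim_zero_one :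
    (completeBipartiteGraph α β).lapMatrix R *ᵥ (Sum.elim 0 1 : α ⊕ β → R) =
      (Fintype.card α : R) • (Sum.elim 0 1 : α ⊕ β → R) -
        (Fintype.card β : R) • (Sum.elim 1 0 : α ⊕ β → R) := by
  ext (a | b) <;>
    simp [completeBipartiteGraph_lapMatrix_mulVec_inl, completeBipartiteGraph_lapMatrix_mulVec_inr]

end CompleteBipartite

namespace completeBipartiteGraph

open Sum

variable (σ τ : Type*) [Fintype σ] [Fintype τ] [DecidableEq σ] [DecidableEq τ] (m n : ℕ)

local notation "V" => Option (Option σ) ⊕ Option (Option τ)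

/- A side of size `k` is modelled as `Option (Option σ)` with `|σ| = k - 2`, so that `none` and
`some none` are the distinguished vertices `a₀, a₁` (resp. `b₀, b₁`). -/
def smithCoeff : V → ℕ
  | inl none => 1
  | inl (some none) => 0
  | inl (some (some _)) => n
  | inr none => 1
  | inr (some none) => n * m
  | inr (some (some _)) => m

def smithDomain : V → V → ℤ
  | inl none => Pi.single (inl none) 1
  | inl (some none) => fun _ => 1
  | inl (some (some s)) => Pi.single (inl (some (some s))) 1 - Pi.single (inl none) 1
  | inr none => Pi.single (inr none) 1
  | inr (some none) =>
      (m : ℤ) • Pi.single (inl none) 1 - (n : ℤ) • Pi.single (inr none) 1 + (Sum.elim 0 1 : V → ℤ)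
  | inr (some (some t)) => Pi.single (inr (some (some t))) 1 - Pi.single (inr none) 1

def smithCodomain : V → V → ℤ
  | inl none => (n : ℤ) • Pi.single (inl none) 1 - (Sum.elim 0 1 : V → ℤ)
  | inl (some none) => Pi.single (inr none) 1
  | inl (some (some s)) => Pi.single (inl (some (some s))) 1 - Pi.single (inl none) 1
  | inr none => (m : ℤ) • Pi.single (inr none) 1 - (Sum.elim 1 0 : V → ℤ)
  | inr (some none) => Pi.single (inl none) 1 - Pi.single (inr none) 1
  | inr (some (some t)) => Pi.single (inr (some (some t))) 1 - Pi.single (inr none) 1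

variable {σ τ m n}

theorem lapMatrix_mulVec_smithDomain (hm : Fintype.card (Option (Option σ)) = m)
    (hn : Fintype.card (Option (Option τ)) = n) (v : V) :
    (completeBipartiteGraph (Option (Option σ)) (Option (Option τ))).lapMatrix ℤ *ᵥ
      smithDomain σ τ m n v = (smithCoeff σ τ m n v : ℤ) • smithCodomain σ τ m n v := by
  rcases v with (_ | _ | s) | (_ | _ | t) <;>
    simp only [smithDomain, smithCodomain, smithCoeff, mulVec_sub, mulVec_add, mulVec_smul,
      completeBipartiteGraph_lapMatrix_mulVec_single_inl,
      completeBipartiteGraph_lapMatrix_mulVec_single_inr,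
      completeBipartiteGraph_lapMatrix_mulVec_elim_zero_one, lapMatrix_mulVec_const_eq_zero,
      hm, hn]
  all_goals push_cast; module

theorem span_smithCodomain : Submodule.span ℤ (Set.range (smithCodomain σ τ m n)) = ⊤ := by
  set p := Submodule.span ℤ (Set.range (smithCodomain σ τ m n))
  have mem v : smithCodomain σ τ m n v ∈ p := Submodule.subset_span ⟨v, rfl⟩
  have hb₀ : Pi.single (inr none) 1 ∈ p := mem (inl (some none))
  have ha₀ : Pi.single (inl none) 1 ∈ p := by
    simpa [smithCodomain] using add_mem (mem (inr (some none))) hb₀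
  have ha s : Pi.single (inl (some (some s))) 1 ∈ p := by
    simpa [smithCodomain] using add_mem (mem (inl (some (some s)))) ha₀
  have hb t : Pi.single (inr (some (some t))) 1 ∈ p := by
    simpa [smithCodomain] using add_mem (mem (inr (some (some t)))) hb₀
  have hβ : (Sum.elim 0 1 : V → ℤ) ∈ p := by
    simpa [smithCodomain] using sub_mem (p.smul_mem (n : ℤ) ha₀) (mem (inl none))
  have hα : (Sum.elim 1 0 : V → ℤ) ∈ p := by
    simpa [smithCodomain] using sub_mem (p.smul_mem (m : ℤ) hb₀) (mem (inr none))
  have hb₁ : Pi.single (inr (some none)) 1 ∈ p := by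
    refine Submodule.single_mem_of_apply_eq_one hβ rfl ?_
    rintro (a | _ | _ | t) hne h0
    exacts [absurd rfl h0, hb₀, absurd rfl hne, hb t]
  have ha₁ : Pi.single (inl (some none)) 1 ∈ p := by
    refine Submodule.single_mem_of_apply_eq_one hα rfl ?_
    rintro ((_ | _ | s) | b) hne h0
    exacts [ha₀, absurd rfl hne, ha s, absurd rfl h0]
  refine Submodule.eq_top_of_forall_single_mem ?_
  rintro ((_ | _ | s) | (_ | _ | t))
  exacts [ha₀, ha₁, ha s, hb₀, hb₁, hb t]

theorem span_smithDomain : Submodule.span ℤ (Set.range (smithDomain σ τ m n)) = ⊤ := by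
  set p := Submodule.span ℤ (Set.range (smithDomain σ τ m n))
  have mem v : smithDomain σ τ m n v ∈ p := Submodule.subset_span ⟨v, rfl⟩
  have ha₀ : Pi.single (inl none) 1 ∈ p := mem (inl none)
  have hb₀ : Pi.single (inr none) 1 ∈ p := mem (inr none)
  have ha s : Pi.single (inl (some (some s))) 1 ∈ p := by
    simpa [smithDomain] using add_mem (mem (inl (some (some s)))) ha₀
  have hb t : Pi.single (inr (some (some t))) 1 ∈ p := by
    simpa [smithDomain] using add_mem (mem (inr (some (some t)))) hb₀
  have hβ : (Sum.elim 0 1 : V → ℤ) ∈ p := by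
    convert add_mem (sub_mem (mem (inr (some none))) (p.smul_mem (m : ℤ) ha₀))
      (p.smul_mem (n : ℤ) hb₀) using 1
    simp only [smithDomain]
    abel
  have hb₁ : Pi.single (inr (some none)) 1 ∈ p := by
    refine Submodule.single_mem_of_apply_eq_one hβ rfl ?_
    rintro (a | _ | _ | t) hne h0
    exacts [absurd rfl h0, hb₀, absurd rfl hne, hb t]
  have ha₁ : Pi.single (inl (some none)) 1 ∈ p := by
    refine Submodule.single_mem_of_apply_eq_one (mem (inl (some none))) rfl ?_
    rintro ((_ | _ | s) | (_ | _ | t)) hne -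
    exacts [ha₀, absurd rfl hne, ha s, hb₀, hb₁, hb t]
  refine Submodule.eq_top_of_forall_single_mem ?_
  rintro ((_ | _ | s) | (_ | _ | t))
  exacts [ha₀, ha₁, ha s, hb₀, hb₁, hb t]

variable (σ τ m n) in
def piZModSmithCoeffEquiv :
    (∀ v, ZMod (smithCoeff σ τ m n v)) ≃ₗ[ℤ] ℤ × (σ → ZMod n) × (τ → ZMod m) × ZMod (n * m) :=
  haveI : Unique (ZMod (smithCoeff σ τ m n (inl none))) := inferInstanceAs (Unique (ZMod 1))
  haveI : Unique (ZMod (smithCoeff σ τ m n (inr none))) := inferInstanceAs (Unique (ZMod 1))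
  (LinearEquiv.sumPiEquivProdPi ℤ _ _ _).trans <|
    (((LinearEquiv.piOptionOptionEquivProd ℤ).trans LinearEquiv.uniqueProd).prodCongr
      ((LinearEquiv.piOptionOptionEquivProd ℤ).trans LinearEquiv.uniqueProd)).trans <|
      (LinearEquiv.prodAssoc ℤ _ _ _).trans <|
        (LinearEquiv.refl ℤ _).prodCongr
          ((LinearEquiv.refl ℤ _).prodCongr (LinearEquiv.prodComm ℤ _ _))

noncomputable def cokernelLapMatrixOptionEquiv (hm : Fintype.card (Option (Option σ)) = m)
    (hn : Fintype.card (Option (Option τ)) = n) :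
    ((completeBipartiteGraph (Option (Option σ)) (Option (Option τ))).lapMatrix ℤ).cokernel ≃+
      ℤ × (σ → ZMod n) × (τ → ZMod m) × ZMod (n * m) :=
  (LinearMap.quotRangeEquivPiZMod _ span_smithDomain span_smithCodomain
    (lapMatrix_mulVec_smithDomain hm hn)).trans (piZModSmithCoeffEquiv σ τ m n).toAddEquiv

noncomputable def cokernelLapMatrixEquiv (hm : 2 ≤ m) (hn : 2 ≤ n) :
    ((completeBipartiteGraph (Fin m) (Fin n)).lapMatrix ℤ).cokernel ≃+
      ℤ × (Fin (m - 2) → ZMod n) × (Fin (n - 2) → ZMod m) × ZMod (n * m) :=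
  have hm' : Fintype.card (Option (Option (Fin (m - 2)))) = m := by simp; omega
  have hn' : Fintype.card (Option (Option (Fin (n - 2)))) = n := by simp; omega
  (completeBipartiteGraphCongr (Fintype.equivOfCardEq (by simp [hm']))
    (Fintype.equivOfCardEq (by simp [hn']))).cokernelLapMatrixEquiv.toAddEquiv.trans
    (cokernelLapMatrixOptionEquiv hm' hn')

end completeBipartiteGraph

def kpartiteGraphThreeEquiv (a b c : ℕ) :
    (Σ i : Fin 3, Fin ([a, b, c].getD i 0)) ≃ (Fin a ⊕ Fin c) ⊕ Fin b where
  toFun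
    | ⟨0, t⟩ => .inl (.inl t)
    | ⟨1, t⟩ => .inr t
    | ⟨2, t⟩ => .inl (.inr t)
  invFun
    | .inl (.inl t) => ⟨0, t⟩
    | .inl (.inr t) => ⟨2, t⟩
    | .inr t => ⟨1, t⟩
  left_inv := by rintro ⟨i, t⟩; fin_cases i <;> rfl
  right_inv := by rintro ((t | t) | t) <;> rfl

def kpartiteGraphThreeIso (a b c : ℕ) :
    kpartiteGraph 3 (fun i => [a, b, c].getD i 0) ≃g
      completeBipartiteGraph (Fin a ⊕ Fin c) (Fin b) where
  __ := kpartiteGraphThreeEquiv a b c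
  map_rel_iff' := by
    rintro ⟨i, s⟩ ⟨j, t⟩
    fin_cases i <;> fin_cases j <;>
      simp [kpartiteGraph, kpartiteGraphThreeEquiv, Sum.isLeft, Sum.isRight]

theorem critical_group_threePartite_general (n₁ n₂ n₃ : ℕ) (h₁ : 2 ≤ n₁) (h₂ : 2 ≤ n₂) :
    Nonempty (
      (((kpartiteGraph 3 (fun i => [n₁, n₂, n₃].getD i 0)).lapMatrix ℤ).cokernel)
        ≃+
      (ℤ × (Fin (n₁ + n₃ - 2) → ZMod n₂) × (Fin (n₂ - 2) → ZMod (n₁ + n₃)) ×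
        ZMod (n₂ * (n₁ + n₃)))) :=
  let e : kpartiteGraph 3 (fun i => [n₁, n₂, n₃].getD i 0) ≃g
      completeBipartiteGraph (Fin (n₁ + n₃)) (Fin n₂) :=
    (kpartiteGraphThreeIso n₁ n₂ n₃).trans (completeBipartiteGraphCongr finSumFinEquiv (.refl _))
  ⟨e.cokernelLapMatrixEquiv.toAddEquiv.trans
    (completeBipartiteGraph.cokernelLapMatrixEquiv (le_add_right h₁) h₂)⟩

/-- The cokernel of the Laplacian of the 3-partite graph `G_{n₁,n₂,n₃}` is
`ℤ ⊕ (ℤ/n₂ℤ)^{n₁+n₃-2} ⊕ (ℤ/(n₁+n₃)ℤ)^{n₂-2} ⊕ ℤ/(n₂(n₁+n₃))ℤ`. -/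
theorem critical_group_threePartite (n₁ n₂ n₃ : ℕ) (h₁ : 2 ≤ n₁) (h₂ : 2 ≤ n₂) (h₃ : 2 ≤ n₃) :
    Nonempty (
      (((kpartiteGraph 3 (fun i => [n₁, n₂, n₃].getD i 0)).lapMatrix ℤ).cokernel)
        ≃+
      (ℤ × (Fin (n₁ + n₃ - 2) → ZMod n₂) × (Fin (n₂ - 2) → ZMod (n₁ + n₃)) ×
        ZMod (n₂ * (n₁ + n₃)))) :=
  critical_group_threePartite_general n₁ n₂ n₃ h₁ h₂
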